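/- arXiv:2601.09343 — 4 statements merged into one kernel-verified Lean document; each statement's English description precedes it below -/
import Mathlib

section
/- Let F be a bipartite multigraph and n ∈ ℕ. For an (n,n)-vertex edge-weighted bipartite graph G = (x_{i,j})_{i,j ∈ [n]}, define the (2n,2n)-graph G⁻ with vertices indexed by {A,B} × [n], where y_{(s,i),(t,j)} = 1 if s = t and i = j, y_{(s,i),(t,j)} = 0 if s = t and i ≠ j, y_{(A,i),(B,j)} = x_{i,j}, and y_{(B,i),(A,j)} = x_{j,i}. Then hom_{F,2n}(G⁻) = Σ_{s : V(F) → {A,B}} hom_{F⊘s, n}(G), where F⊘s is the multigraph obtained by contracting every connected component of the subgraph on the monochromatic edges L = {uv ∈ E(F) : s(u) = s(v)} and keeping the edges of E(F) \ L. -/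
/-- A bipartite multigraph: finite vertex sets `A`, `B` and a multiset of edges. -/
structure BipartiteMultigraph where
  A : Type
  B : Type
  [fintypeA : Fintype A]
  [fintypeB : Fintype B]
  [decA : DecidableEq A]
  [decB : DecidableEq B]
  edges : Multiset (A × B)

attribute [instance] BipartiteMultigraph.fintypeA BipartiteMultigraph.fintypeB
  BipartiteMultigraph.decA BipartiteMultigraph.decB

/-- `hom_{F,·}` evaluated at edge weights `w : I → I → K`. -/
def homEval (K : Type) [CommSemiring K] (F : BipartiteMultigraph)
    (I : Type) [Fintype I] [DecidableEq I] (w : I → I → K) : K :=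
  ∑ f : F.A → I, ∑ g : F.B → I,
    (F.edges.map fun e => w (f e.1) (g e.2)).prod

open Classical

/-- Two vertices of `F` are related if they are joined by a monochromatic edge with respect
to the side-assignment `s : V(F) → {A,B}` (here `true` codes the side `A`). -/
def monoRel (F : BipartiteMultigraph) (s : F.A ⊕ F.B → Bool)
    (u v : F.A ⊕ F.B) : Prop :=
  ∃ e ∈ F.edges, s (Sum.inl e.1) = s (Sum.inr e.2) ∧
    ((u = Sum.inl e.1 ∧ v = Sum.inr e.2) ∨ (u = Sum.inr e.2 ∧ v = Sum.inl e.1))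

/-- The homomorphism evaluation of the quotient multigraph `F ⊘ s` at `G`: the sum ranges
over the maps `V(F) → [n]` that are constant on the connected components of the
monochromatic subgraph `(V(F), L)` (these correspond exactly to the maps
`V(F⊘s) → [n]`), and the product over the edges in `E(F) \ L`, oriented according to `s`
(`s = true` is the left side `A`). -/
noncomputable def quotHomEval (K : Type) [CommRing K] (F : BipartiteMultigraph)
    (s : F.A ⊕ F.B → Bool) (n : ℕ) (G : Fin n → Fin n → K) : K :=
  ∑ h ∈ Finset.univ.filter
      (fun h : F.A ⊕ F.B → Fin n => ∀ u v, Relation.EqvGen (monoRel F s) u v → h u = h v),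
    ((F.edges.filter fun e => ¬ s (Sum.inl e.1) = s (Sum.inr e.2)).map
      (fun e =>
        if s (Sum.inl e.1) = true then G (h (Sum.inl e.1)) (h (Sum.inr e.2))
        else G (h (Sum.inr e.2)) (h (Sum.inl e.1)))).prod

/-! A map `V(F) → {A,B} × [n]` is a pair of a side assignment `s` and a label map `h`.
For fixed `s`, a monochromatic edge contributes the Kronecker delta of the labels of its ends and
a bichromatic edge contributes an entry of `G` oriented by `s`. So the product vanishes unless `h`
is constant along monochromatic edges, i.e. on the components of `(V(F), L)`, and is then the
weight of the induced map `V(F ⊘ s) → [n]`. -/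

theorem Fintype.sum_arrow_prod {γ α β M : Type} [Fintype γ] [DecidableEq γ]
    [Fintype α] [Fintype β] [AddCommMonoid M] (φ : (γ → α × β) → M) :
    ∑ f : γ → α × β, φ f = ∑ a : γ → α, ∑ b : γ → β, φ fun x => (a x, b x) := by
  rw [← (Equiv.arrowProdEquivProdArrow γ (fun _ => α) (fun _ => β)).symm.sum_comp,
    Fintype.sum_prod_type]
  rfl

theorem Multiset.prod_map_ite_eq_ite_prod_filter {α M : Type} [CommMonoidWithZero M]
    (m : Multiset α) (p q : α → Prop) [DecidablePred p] [DecidablePred q]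
    [Decidable (∀ a ∈ m, p a → q a)] (g : α → M) :
    (m.map fun a => if p a then (if q a then 1 else 0) else g a).prod =
      if ∀ a ∈ m, p a → q a then ((m.filter fun a => ¬ p a).map g).prod else 0 := by
  split_ifs with hpq
  · conv_lhs => rw [← m.filter_add_not p]
    rw [Multiset.map_add, Multiset.prod_add, Multiset.prod_eq_one, one_mul]
    · exact congrArg _ (Multiset.map_congr rfl fun a ha => if_neg (Multiset.mem_filter.1 ha).2)
    · simp +contextual [hpq]
  · push Not at hpq
    obtain ⟨a, ha, hp, hq⟩ := hpq
    exact Multiset.prod_eq_zero (Multiset.mem_map.2 ⟨a, ha, by simp [hp, hq]⟩)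

namespace BipartiteMultigraph

variable (F : BipartiteMultigraph)

theorem homEval_eq_sum_vertexMap (K : Type) [CommSemiring K] (I : Type) [Fintype I]
    [DecidableEq I] (w : I → I → K) :
    homEval K F I w =
      ∑ φ : F.A ⊕ F.B → I, (F.edges.map fun e => w (φ (.inl e.1)) (φ (.inr e.2))).prod := by
  rw [← (Equiv.sumArrowEquivProdArrow F.A F.B I).symm.sum_comp, Fintype.sum_prod_type]
  rfl

theorem eqvGen_monoRel_respects_iff {X : Type} (s : F.A ⊕ F.B → Bool) (h : F.A ⊕ F.B → X) :
    (∀ u v, Relation.EqvGen (monoRel F s) u v → h u = h v) ↔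
      ∀ e ∈ F.edges, s (.inl e.1) = s (.inr e.2) → h (.inl e.1) = h (.inr e.2) := by
  refine ⟨fun H e he hs => H _ _ (.rel _ _ ⟨e, he, hs, .inl ⟨rfl, rfl⟩⟩), fun H u v huv => ?_⟩
  induction huv with
  | rel u v r =>
    obtain ⟨e, he, hs, ⟨rfl, rfl⟩ | ⟨rfl, rfl⟩⟩ := r
    exacts [H e he hs, (H e he hs).symm]
  | refl => rfl
  | symm _ _ _ ih => exact ih.symm
  | trans _ _ _ _ _ ih₁ ih₂ => exact ih₁.trans ih₂

end BipartiteMultigraph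

/-- `hom_{F,2n}(G⁻) = Σ_{s : V(F) → {A,B}} hom_{F⊘s, n}(G)`, where `[2n]` is identified
with `Bool × [n]` (with `true` coding `A`) and `G⁻` is the doubled graph with identity
weights within each side and the weights of `G` across sides. -/
theorem homEval_doubled (K : Type) [CommRing K] (F : BipartiteMultigraph) (n : ℕ)
    (G : Fin n → Fin n → K) :
    homEval K F (Bool × Fin n)
      (fun p q =>
        if p.1 = q.1 then (if p.2 = q.2 then (1 : K) else 0)
        else if p.1 = true then G p.2 q.2 else G q.2 p.2) =
    ∑ s : F.A ⊕ F.B → Bool, quotHomEval K F s n G := by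
  rw [F.homEval_eq_sum_vertexMap, Fintype.sum_arrow_prod]
  refine Finset.sum_congr rfl fun s _ => ?_
  rw [quotHomEval, Finset.sum_filter]
  refine Finset.sum_congr rfl fun h _ => ?_
  simp only [F.eqvGen_monoRel_respects_iff, Multiset.prod_map_ite_eq_ite_prod_filter]
end

section
/- Let K be a field of characteristic zero and n, m ∈ ℕ. If F₁, …, F_r are pairwise non-isomorphic bipartite multigraphs without isolated vertices, each with at most n left vertices and at most m right vertices, then the polynomials hom_{F₁,n,m}, …, hom_{F_r,n,m} ∈ K[X_{n,m}] are linearly independent. -/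
/-- The homomorphism polynomial `hom_{F,n,m} = Σ_{h : A → [n], B → [m]} Π_{ab ∈ E(F)} x_{h(a),h(b)}`
in the variables `X_{n,m} = {x_{i,j} : i ∈ [n], j ∈ [m]}`. -/
noncomputable def homPoly (K : Type) [CommSemiring K] (F : BipartiteMultigraph) (n m : ℕ) :
    MvPolynomial (Fin n × Fin m) K :=
  ∑ f : F.A → Fin n, ∑ g : F.B → Fin m,
    (F.edges.map fun e => MvPolynomial.X (f e.1, g e.2)).prod

/-- Isomorphism of bipartite multigraphs: bijections of the two sides of the bipartition
carrying the edge multiset of one graph to that of the other (preserving multiplicities). -/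
def BMGIso (F G : BipartiteMultigraph) : Prop :=
  ∃ (eA : F.A ≃ G.A) (eB : F.B ≃ G.B),
    F.edges.map (Prod.map eA eB) = G.edges

/-- `F` has no isolated vertices. -/
def NoIsolatedVertices (F : BipartiteMultigraph) : Prop :=
  (∀ a : F.A, ∃ e ∈ F.edges, e.1 = a) ∧ (∀ b : F.B, ∃ e ∈ F.edges, e.2 = b)

/-!
The coefficient of the monomial `∏_{e ∈ D} x_e` in `hom_{F,n,m}` counts the pairs of maps
`A → [n]`, `B → [m]` sending the edge multiset of `F` onto `D`. Take for `D` the image of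
`F_i` under an injective placement. A graph `F_j` without isolated vertices that also maps
onto `D` covers the same vertices, so it has at least as many vertices as `F_i`; if it has at
most as many, its map is injective and `F_j ≅ F_i`. Ordering the `F_i` by vertex count, the
coefficient functionals are therefore triangular with nonzero diagonal (the diagonal counts
include the injective placement itself, and `char K = 0`).
-/

open MvPolynomial Finset Function

lemma Multiset.prod_map_X_eq_monomial {σ R : Type*} [CommSemiring R] [DecidableEq σ]
    (s : Multiset σ) :
    (s.map (X : σ → MvPolynomial σ R)).prod = monomial (Multiset.toFinsupp s) 1 := by
  induction s using Multiset.induction_on with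
  | empty => simp
  | cons a s ih =>
    rw [Multiset.map_cons, Multiset.prod_cons, ih, ← Multiset.singleton_add,
      Multiset.toFinsupp_add, Multiset.toFinsupp_singleton, X, monomial_mul, one_mul]

lemma exists_equiv_comp_eq_of_range_eq {α β γ : Type*} {f : α → γ} {g : β → γ}
    (hf : Injective f) (hg : Injective g) (h : Set.range f = Set.range g) :
    ∃ e : α ≃ β, ∀ a, g (e a) = f a :=
  ⟨(Equiv.ofInjective f hf).trans ((Equiv.setCongr h).trans (Equiv.ofInjective g hg).symm),
    fun a => by simp [Equiv.apply_ofInjective_symm]⟩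

lemma injective_of_card_le_card_image {α β : Type*} [Fintype α] [DecidableEq β] {f : α → β}
    (h : Fintype.card α ≤ #(univ.image f)) : Injective f := by
  rw [← Set.injOn_univ, ← coe_univ, ← card_image_iff]
  exact le_antisymm card_image_le h

lemma linearIndependent_of_triangular_functionals {ι R M α : Type*} [Ring R]
    [NoZeroDivisors R] [AddCommGroup M] [Module R M] [LinearOrder α] {v : ι → M} (w : ι → α)
    (φ : ι → M →ₗ[R] R) (hdiag : ∀ i, φ i (v i) ≠ 0)
    (hoff : ∀ i j, j ≠ i → w j ≤ w i → φ i (v j) = 0) :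
    LinearIndependent R v := by
  classical
  rw [linearIndependent_iff']
  intro s c hc i₀ hi₀
  by_contra hc₀
  obtain ⟨i, hi, hmax⟩ :=
    (s.filter (c · ≠ 0)).exists_max_image w ⟨i₀, by simp [hi₀, hc₀]⟩
  rw [mem_filter] at hi
  have hφ : ∑ j ∈ s, c j * φ i (v j) = c i * φ i (v i) := by
    refine sum_eq_single_of_mem i hi.1 fun j hj hji => ?_
    by_cases hcj : c j = 0
    · rw [hcj, zero_mul]
    · rw [hoff i j hji (hmax j (mem_filter.2 ⟨hj, hcj⟩)), mul_zero]
  have := congrArg (φ i) hc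
  simp only [map_sum, map_smul, smul_eq_mul, map_zero, hφ] at this
  exact mul_ne_zero hi.2 (hdiag i) this

namespace BipartiteMultigraph

variable {α β : Type*}

def edgeImage (F : BipartiteMultigraph) (f : F.A → α) (g : F.B → β) : Multiset (α × β) :=
  F.edges.map (Prod.map f g)

lemma coeff_homPoly (K : Type) [CommSemiring K] (F : BipartiteMultigraph) (n m : ℕ)
    (D : Multiset (Fin n × Fin m)) :
    coeff D.toFinsupp (homPoly K F n m) =
      #{p : (F.A → Fin n) × (F.B → Fin m) | F.edgeImage p.1 p.2 = D} := by
  rw [card_filter, Nat.cast_sum, Fintype.sum_prod_type, homPoly]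
  simp only [coeff_sum]
  refine sum_congr rfl fun f _ => sum_congr rfl fun g _ => ?_
  have hX : F.edges.map (fun e => (X (f e.1, g e.2) : MvPolynomial (Fin n × Fin m) K)) =
      (F.edgeImage f g).map X := by
    rw [edgeImage, Multiset.map_map]; rfl
  rw [hX, Multiset.prod_map_X_eq_monomial, coeff_monomial]
  simp only [Multiset.toFinsupp.injective.eq_iff, Nat.cast_ite, Nat.cast_one, Nat.cast_zero]

lemma image_univ_left_eq_edgeImage_fst [DecidableEq α] {F : BipartiteMultigraph}
    (hF : NoIsolatedVertices F) (f : F.A → α) (g : F.B → β) :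
    univ.image f = ((F.edgeImage f g).map Prod.fst).toFinset := by
  ext x
  simp only [mem_image, mem_univ, true_and, Multiset.mem_toFinset, edgeImage, Multiset.map_map,
    Multiset.mem_map]
  constructor
  · rintro ⟨a, rfl⟩
    obtain ⟨e, he, rfl⟩ := hF.1 a
    exact ⟨e, he, rfl⟩
  · rintro ⟨e, -, rfl⟩
    exact ⟨e.1, rfl⟩

lemma image_univ_right_eq_edgeImage_snd [DecidableEq β] {F : BipartiteMultigraph}
    (hF : NoIsolatedVertices F) (f : F.A → α) (g : F.B → β) :
    univ.image g = ((F.edgeImage f g).map Prod.snd).toFinset := by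
  ext y
  simp only [mem_image, mem_univ, true_and, Multiset.mem_toFinset, edgeImage, Multiset.map_map,
    Multiset.mem_map]
  constructor
  · rintro ⟨b, rfl⟩
    obtain ⟨e, he, rfl⟩ := hF.2 b
    exact ⟨e, he, rfl⟩
  · rintro ⟨e, -, rfl⟩
    exact ⟨e.2, rfl⟩

lemma bmgIso_of_edgeImage_eq [DecidableEq α] [DecidableEq β] {G H : BipartiteMultigraph}
    (hG : NoIsolatedVertices G) (hH : NoIsolatedVertices H)
    (hcard : Fintype.card H.A + Fintype.card H.B ≤ Fintype.card G.A + Fintype.card G.B)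
    {f₀ : G.A → α} {g₀ : G.B → β} (hf₀ : Injective f₀) (hg₀ : Injective g₀)
    {f : H.A → α} {g : H.B → β} (h : H.edgeImage f g = G.edgeImage f₀ g₀) :
    BMGIso H G := by
  have hA : univ.image f = univ.image f₀ := by
    rw [image_univ_left_eq_edgeImage_fst hH f g, image_univ_left_eq_edgeImage_fst hG f₀ g₀, h]
  have hB : univ.image g = univ.image g₀ := by
    rw [image_univ_right_eq_edgeImage_snd hH f g, image_univ_right_eq_edgeImage_snd hG f₀ g₀, h]
  have hGA : Fintype.card G.A ≤ #(univ.image f) := by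
    rw [hA, card_image_of_injective _ hf₀]; rfl
  have hGB : Fintype.card G.B ≤ #(univ.image g) := by
    rw [hB, card_image_of_injective _ hg₀]; rfl
  have hHA : #(univ.image f) ≤ Fintype.card H.A := card_image_le
  have hHB : #(univ.image g) ≤ Fintype.card H.B := card_image_le
  -- `f`, `g` hit as many points as the injective `f₀`, `g₀`; `hcard` leaves no room to spare.
  have hf : Injective f := injective_of_card_le_card_image (by omega)
  have hg : Injective g := injective_of_card_le_card_image (by omega)
  obtain ⟨eA, heA⟩ := exists_equiv_comp_eq_of_range_eq hf hf₀
    (by simpa using congrArg ((↑) : Finset α → Set α) hA)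
  obtain ⟨eB, heB⟩ := exists_equiv_comp_eq_of_range_eq hg hg₀
    (by simpa using congrArg ((↑) : Finset β → Set β) hB)
  refine ⟨eA, eB, Multiset.map_injective (hf₀.prodMap hg₀) ?_⟩
  rw [Multiset.map_map, Prod.map_comp_map, show f₀ ∘ eA = f from funext heA,
    show g₀ ∘ eB = g from funext heB]
  exact h

end BipartiteMultigraph

open BipartiteMultigraph

/-- Over a field of characteristic zero, the homomorphism polynomials of pairwise
non-isomorphic bipartite multigraphs without isolated vertices, with at most `n` left and
`m` right vertices each, are linearly independent in `K[X_{n,m}]`. -/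
theorem homPoly_linearIndependent (K : Type) [Field K] [CharZero K] (n m r : ℕ)
    (F : Fin r → BipartiteMultigraph)
    (hiso : ∀ i j : Fin r, i ≠ j → ¬ BMGIso (F i) (F j))
    (hnoiso : ∀ i, NoIsolatedVertices (F i))
    (hcard : ∀ i, Fintype.card (F i).A ≤ n ∧ Fintype.card (F i).B ≤ m) :
    LinearIndependent K (fun i : Fin r => homPoly K (F i) n m) := by
  have hemb : ∀ i, ∃ (f : (F i).A → Fin n) (g : (F i).B → Fin m),
      Injective f ∧ Injective g := by
    intro i
    obtain ⟨f⟩ := Embedding.nonempty_of_card_le ((hcard i).1.trans (Fintype.card_fin n).ge)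
    obtain ⟨g⟩ := Embedding.nonempty_of_card_le ((hcard i).2.trans (Fintype.card_fin m).ge)
    exact ⟨f, g, f.injective, g.injective⟩
  choose f g hf hg using hemb
  refine linearIndependent_of_triangular_functionals
    (fun i => Fintype.card (F i).A + Fintype.card (F i).B)
    (fun i => lcoeff K ((F i).edgeImage (f i) (g i)).toFinsupp) (fun i => ?_)
    (fun i j hji hle => ?_)
  · rw [lcoeff_apply, coeff_homPoly, Nat.cast_ne_zero, ← Nat.pos_iff_ne_zero, card_pos]
    exact ⟨(f i, g i), by simp⟩
  · rw [lcoeff_apply, coeff_homPoly, Nat.cast_eq_zero, card_eq_zero, filter_eq_empty_iff]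
    rintro ⟨f', g'⟩ - hD
    exact hiso j i hji (bmgIso_of_edgeImage_eq (hnoiso i) (hnoiso j) hle (hf i) (hg i) hD)
end

section
/- Let K be a field of characteristic zero and n, m ∈ ℕ. For bipartite multigraphs F, F' without isolated vertices and with at most (n,m) vertices, the embedding polynomials satisfy emb_{F,n,m} = emb_{F',n,m} if and only if F ≅ F'. -/
/-- The embedding polynomial
`emb_{F,n,m} = Σ_{h : A ↪ [n], B ↪ [m]} Π_{ab ∈ E(F)} x_{h(a),h(b)}`, the sum ranging over
pairs of injective maps sending `A` into `[n]` and `B` into `[m]`. -/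
noncomputable def embPoly (K : Type) [CommSemiring K] (F : BipartiteMultigraph) (n m : ℕ) :
    MvPolynomial (Fin n × Fin m) K :=
  ∑ f : F.A ↪ Fin n, ∑ g : F.B ↪ Fin m,
    (F.edges.map fun e => MvPolynomial.X (f e.1, g e.2)).prod

open MvPolynomial

private lemma prod_map_X {K σ : Type*} [CommSemiring K] [DecidableEq σ] (s : Multiset σ) :
    (s.map (X : σ → MvPolynomial σ K)).prod = monomial (Multiset.toFinsupp s) 1 := by
  induction s using Multiset.induction with
  | empty => simp [Multiset.toFinsupp_zero, monomial_zero']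
  | cons a s ih =>
      rw [Multiset.map_cons, Multiset.prod_cons, ih, X, monomial_mul, one_mul]
      congr 1
      rw [show (a ::ₘ s) = {a} + s from by simp, map_add, Multiset.toFinsupp_singleton]

private lemma coeff_embPoly (K : Type) [CommSemiring K] (F : BipartiteMultigraph) (n m : ℕ)
    (d : (Fin n × Fin m) →₀ ℕ) :
    MvPolynomial.coeff d (embPoly K F n m) =
      ((Finset.univ.filter (fun fg : (F.A ↪ Fin n) × (F.B ↪ Fin m) =>
        Multiset.toFinsupp (F.edges.map fun e => (fg.1 e.1, fg.2 e.2)) = d)).card : K) := by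
  classical
  unfold embPoly
  rw [← Fintype.sum_prod_type']
  have : ∀ fg : (F.A ↪ Fin n) × (F.B ↪ Fin m),
      (F.edges.map fun e => (X (fg.1 e.1, fg.2 e.2) : MvPolynomial (Fin n × Fin m) K)).prod
      = monomial (Multiset.toFinsupp (F.edges.map fun e => (fg.1 e.1, fg.2 e.2))) 1 := by
    intro fg
    rw [← prod_map_X, Multiset.map_map]
    rfl
  simp_rw [this]
  rw [MvPolynomial.coeff_sum]
  simp_rw [MvPolynomial.coeff_monomial]
  rw [Finset.sum_boole]

private lemma embPoly_congr (K : Type) [CommSemiring K] (n m : ℕ) {F F' : BipartiteMultigraph}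
    (h : BMGIso F F') : embPoly K F n m = embPoly K F' n m := by
  obtain ⟨eA, eB, he⟩ := h
  unfold embPoly
  refine Fintype.sum_equiv (Equiv.embeddingCongr eA (Equiv.refl (Fin n))) _ _ (fun f => ?_)
  refine Fintype.sum_equiv (Equiv.embeddingCongr eB (Equiv.refl (Fin m))) _ _ (fun g => ?_)
  rw [← he, Multiset.map_map]
  congr 1
  apply Multiset.map_congr rfl
  intro e _
  simp [Function.Embedding.congr]

/-- Over a field of characteristic zero, for bipartite multigraphs `F`, `F'` without
isolated vertices and with at most `(n,m)` vertices, `emb_{F,n,m} = emb_{F',n,m}` iff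
`F ≅ F'`. -/
theorem embPoly_eq_iff_iso (K : Type) [Field K] [CharZero K] (n m : ℕ)
    (F F' : BipartiteMultigraph)
    (hF : NoIsolatedVertices F) (hF' : NoIsolatedVertices F')
    (hcard : Fintype.card F.A ≤ n ∧ Fintype.card F.B ≤ m)
    (hcard' : Fintype.card F'.A ≤ n ∧ Fintype.card F'.B ≤ m) :
    embPoly K F n m = embPoly K F' n m ↔ BMGIso F F' := by
  constructor
  · intro heq
    obtain ⟨f₀⟩ : Nonempty (F.A ↪ Fin n) :=
      Function.Embedding.nonempty_of_card_le (by simpa using hcard.1)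
    obtain ⟨g₀⟩ : Nonempty (F.B ↪ Fin m) :=
      Function.Embedding.nonempty_of_card_le (by simpa using hcard.2)
    set d : (Fin n × Fin m) →₀ ℕ :=
      Multiset.toFinsupp (F.edges.map fun e => (f₀ e.1, g₀ e.2)) with hd
    have h1 : MvPolynomial.coeff d (embPoly K F n m) ≠ 0 := by
      rw [coeff_embPoly]
      have hmem : ((f₀, g₀) : (F.A ↪ Fin n) × (F.B ↪ Fin m)) ∈
          Finset.univ.filter (fun fg : (F.A ↪ Fin n) × (F.B ↪ Fin m) =>
            Multiset.toFinsupp (F.edges.map fun e => (fg.1 e.1, fg.2 e.2)) = d) := by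
        simp [hd]
      exact_mod_cast Nat.cast_ne_zero.mpr (Finset.card_ne_zero_of_mem hmem)
    rw [heq, coeff_embPoly] at h1
    have h2 := Nat.cast_ne_zero.mp h1
    obtain ⟨⟨f', g'⟩, hmem⟩ := Finset.card_ne_zero.mp h2
    rw [Finset.mem_filter] at hmem
    have hS : F'.edges.map (fun e => (f' e.1, g' e.2)) =
        F.edges.map (fun e => (f₀ e.1, g₀ e.2)) :=
      Multiset.toFinsupp.injective (hmem.2.trans hd)
    -- existence of matching vertices
    have hA : ∀ a : F.A, ∃ a' : F'.A, f' a' = f₀ a := by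
      intro a
      obtain ⟨e, he, h1e⟩ := hF.1 a
      have hm : (f₀ a, g₀ e.2) ∈ F.edges.map (fun e => (f₀ e.1, g₀ e.2)) :=
        Multiset.mem_map.mpr ⟨e, he, by rw [h1e]⟩
      rw [← hS] at hm
      obtain ⟨e', _, heq'⟩ := Multiset.mem_map.mp hm
      exact ⟨e'.1, (Prod.ext_iff.mp heq').1⟩
    have hA' : ∀ a' : F'.A, ∃ a : F.A, f₀ a = f' a' := by
      intro a'
      obtain ⟨e, he, h1e⟩ := hF'.1 a'
      have hm : (f' a', g' e.2) ∈ F'.edges.map (fun e => (f' e.1, g' e.2)) :=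
        Multiset.mem_map.mpr ⟨e, he, by rw [h1e]⟩
      rw [hS] at hm
      obtain ⟨e', _, heq'⟩ := Multiset.mem_map.mp hm
      exact ⟨e'.1, (Prod.ext_iff.mp heq').1⟩
    have hB : ∀ b : F.B, ∃ b' : F'.B, g' b' = g₀ b := by
      intro b
      obtain ⟨e, he, h1e⟩ := hF.2 b
      have hm : (f₀ e.1, g₀ b) ∈ F.edges.map (fun e => (f₀ e.1, g₀ e.2)) :=
        Multiset.mem_map.mpr ⟨e, he, by rw [h1e]⟩
      rw [← hS] at hm
      obtain ⟨e', _, heq'⟩ := Multiset.mem_map.mp hm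
      exact ⟨e'.2, (Prod.ext_iff.mp heq').2⟩
    have hB' : ∀ b' : F'.B, ∃ b : F.B, g₀ b = g' b' := by
      intro b'
      obtain ⟨e, he, h1e⟩ := hF'.2 b'
      have hm : (f' e.1, g' b') ∈ F'.edges.map (fun e => (f' e.1, g' e.2)) :=
        Multiset.mem_map.mpr ⟨e, he, by rw [h1e]⟩
      rw [hS] at hm
      obtain ⟨e', _, heq'⟩ := Multiset.mem_map.mp hm
      exact ⟨e'.2, (Prod.ext_iff.mp heq').2⟩
    let eA : F.A ≃ F'.A :=
      { toFun := fun a => (hA a).choose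
        invFun := fun a' => (hA' a').choose
        left_inv := fun a => f₀.injective (((hA' _).choose_spec).trans ((hA a).choose_spec))
        right_inv := fun a' => f'.injective (((hA _).choose_spec).trans ((hA' a').choose_spec)) }
    let eB : F.B ≃ F'.B :=
      { toFun := fun b => (hB b).choose
        invFun := fun b' => (hB' b').choose
        left_inv := fun b => g₀.injective (((hB' _).choose_spec).trans ((hB b).choose_spec))
        right_inv := fun b' => g'.injective (((hB _).choose_spec).trans ((hB' b').choose_spec)) }
    refine ⟨eA, eB, ?_⟩
    have hinj : Function.Injective (Prod.map f' g') :=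
      f'.injective.prodMap g'.injective
    apply Multiset.map_injective hinj
    rw [Multiset.map_map]
    have : (Prod.map f' g') ∘ (Prod.map eA eB) = fun e : F.A × F.B => (f₀ e.1, g₀ e.2) := by
      funext e
      simp only [Function.comp_apply, Prod.map_apply]
      exact Prod.ext ((hA e.1).choose_spec) ((hB e.2).choose_spec)
    rw [this]
    have : F'.edges.map (Prod.map f' g') = F'.edges.map (fun e => (f' e.1, g' e.2)) := rfl
    rw [this, hS]
  · exact embPoly_congr K n m
end

section
/- Let Γ be a group acting on a variable set X and let C be a Γ-symmetric algebraic circuit over X and a field K. Then there exists a Γ-symmetric rigid circuit C' with ‖C'‖ ≤ ‖C‖ computing the same polynomial as C; moreover if C is a symmetric formula then C' is a symmetric formula with multiedges, and if C is a symmetric skew circuit then so is C'. -/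
/-- An algebraic circuit over variables `X` and field `K`: a finite DAG of gates, with
input gates labelled by `X ∪ K` (each such label occurring on at most one gate, and input
gates having no incoming wires), internal gates labelled `+` (`Sum.inr false`) or `×`
(`Sum.inr true`), wires with multiplicities, and a unique output gate. -/
structure Circuit (X K : Type) where
  gates : Type
  [fintypeGates : Fintype gates]
  [decEqGates : DecidableEq gates]
  /-- `wires g h` = multiplicity of the wire from the child `g` into the gate `h`. -/
  wires : gates → gates → ℕ
  label : gates → (X ⊕ K) ⊕ Bool
  rank : gates → ℕ
  acyclic : ∀ g h, 0 < wires g h → rank g < rank h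
  input_no_incoming : ∀ g h, (label h).isLeft → wires g h = 0
  input_unique : ∀ g h (x : X ⊕ K), label g = Sum.inl x → label h = Sum.inl x → g = h
  out : gates
  out_no_outgoing : ∀ h, wires out h = 0
  out_unique : ∀ g, (∀ h, wires g h = 0) → g = out

attribute [instance] Circuit.fintypeGates Circuit.decEqGates

namespace Circuit

variable {X K : Type}

/-- The size `‖C‖` of a circuit: the number of gates plus the number of wires, counted
with multiplicity. -/
def size (C : Circuit X K) : ℕ :=
  Fintype.card C.gates + ∑ g : C.gates, ∑ h : C.gates, C.wires g h

/-- `val` is a consistent valuation of the gates of `C` by polynomials: input gates get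
their variable/constant, `+` gates the (multiplicity-weighted) sum of their children,
`×` gates the product of their children with multiplicities as exponents. -/
def Valuation [Field K] (C : Circuit X K) (val : C.gates → MvPolynomial X K) : Prop :=
  (∀ g (x : X), C.label g = Sum.inl (Sum.inl x) → val g = MvPolynomial.X x) ∧
  (∀ g (c : K), C.label g = Sum.inl (Sum.inr c) → val g = MvPolynomial.C c) ∧
  (∀ g, C.label g = Sum.inr false → val g = ∑ h : C.gates, (C.wires h g) • val h) ∧
  (∀ g, C.label g = Sum.inr true → val g = ∏ h : C.gates, (val h) ^ (C.wires h g))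

/-- The circuit `C` computes the polynomial `p`. -/
def Computes [Field K] (C : Circuit X K) (p : MvPolynomial X K) : Prop :=
  ∃ val, C.Valuation val ∧ val C.out = p

/-- `σ` is an automorphism of the circuit `C`: a permutation of the gates preserving wires
(with multiplicities, hence also non-wires) and the labels of internal gates. -/
def IsAuto (C : Circuit X K) (σ : C.gates ≃ C.gates) : Prop :=
  (∀ g h, C.wires (σ g) (σ h) = C.wires g h) ∧
  (∀ g (b : Bool), C.label g = Sum.inr b → C.label (σ g) = Sum.inr b)

/-- `C` is `Γ`-symmetric: every `π ∈ Γ` (acting on the variables `X` and fixing the field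
constants) extends to an automorphism of `C`. -/
def Symmetric (Γ : Type) [Group Γ] [MulAction Γ X] (C : Circuit X K) : Prop :=
  ∀ π : Γ, ∃ σ : C.gates ≃ C.gates, C.IsAuto σ ∧
    ∀ g (x : X ⊕ K), C.label g = Sum.inl x →
      C.label (σ g) = Sum.inl (Sum.map (fun y => π • y) id x)

/-- `C` is rigid: the only automorphism fixing every input gate is the identity. -/
def Rigid (C : Circuit X K) : Prop :=
  ∀ σ : C.gates ≃ C.gates, C.IsAuto σ →
    (∀ g, (C.label g).isLeft → σ g = g) → σ = Equiv.refl C.gates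

/-- `C` is a formula with multiedges: the internal gates form a tree, i.e. every internal
gate other than the output has exactly one parent gate. -/
def IsFormulaML (C : Circuit X K) : Prop :=
  ∀ g, (C.label g).isRight → g ≠ C.out →
    (Finset.univ.filter fun h => 0 < C.wires g h).card = 1

/-- `C` is a formula: no multiedges and the internal gates form a tree. -/
def IsFormula (C : Circuit X K) : Prop :=
  (∀ g h, C.wires g h ≤ 1) ∧ C.IsFormulaML

/-- `C` is skew: every multiplication gate has at most one child that is an internal
(non-input) gate. -/
def IsSkew (C : Circuit X K) : Prop :=
  ∀ g, C.label g = Sum.inr true →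
    (Finset.univ.filter fun h => 0 < C.wires h g ∧ (C.label h).isRight).card ≤ 1

end Circuit

/-!
Let `A` be the group of automorphisms of `C` fixing every input gate. Gates in one `A`-orbit
compute the same polynomial, so merging each orbit into a single gate, which inherits the
wires entering one of its members, gives a circuit computing the same polynomial with at most
as many gates and wires. `A` is normalised by every automorphism, so the automorphisms
realising the `Γ`-symmetry descend to the merged circuit. The parents (resp. internal
children) of a merged gate are the orbits of those of any one member, so the formula and skew
conditions are inherited. If `C` is not rigid then `A` is nontrivial and merging
strictly reduces the number of gates, so iterating the merge ends in a rigid circuit.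
-/

namespace Circuit

variable {X K : Type} {C : Circuit X K} {σ τ : Equiv.Perm C.gates}

lemma isAuto_one : C.IsAuto 1 :=
  ⟨fun _ _ => rfl, fun _ _ h => h⟩

lemma IsAuto.mul (hσ : C.IsAuto σ) (hτ : C.IsAuto τ) : C.IsAuto (σ * τ) :=
  ⟨fun g h => by rw [Equiv.Perm.mul_apply, Equiv.Perm.mul_apply, hσ.1, hτ.1],
   fun g b hb => hσ.2 _ b (hτ.2 g b hb)⟩

lemma IsAuto.pow (hσ : C.IsAuto σ) (n : ℕ) : C.IsAuto (σ ^ n) := by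
  induction n with
  | zero => exact isAuto_one
  | succ n ih => rw [pow_succ]; exact ih.mul hσ

-- A permutation of a finite set has finite order, so its inverse is one of its powers.
lemma IsAuto.inv (hσ : C.IsAuto σ) : C.IsAuto σ⁻¹ := by
  obtain ⟨n, hn⟩ := mem_powers_iff_mem_zpowers.mpr (inv_mem (Subgroup.mem_zpowers σ))
  rw [← hn]
  exact hσ.pow n

variable (C) in
def autGroup : Subgroup (Equiv.Perm C.gates) where
  carrier := {σ | C.IsAuto σ}
  one_mem' := isAuto_one
  mul_mem' := IsAuto.mul
  inv_mem' := IsAuto.inv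

lemma IsAuto.isLeft_label_apply_iff (hσ : C.IsAuto σ) (g : C.gates) :
    (C.label (σ g)).isLeft ↔ (C.label g).isLeft := by
  have internal_of_internal {ρ : Equiv.Perm C.gates} (hρ : C.IsAuto ρ) (g : C.gates)
      (hg : ¬(C.label g).isLeft) : ¬(C.label (ρ g)).isLeft := by
    obtain ⟨b, hb⟩ := Sum.isRight_iff.mp (Sum.not_isLeft.mp hg)
    rw [hρ.2 g b hb]
    exact Bool.false_ne_true
  refine ⟨not_imp_not.mp (internal_of_internal hσ g), fun hg => ?_⟩
  by_contra hσg
  have := internal_of_internal hσ.inv (σ g) hσg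
  simp only [Equiv.Perm.coe_inv, Equiv.symm_apply_apply] at this
  exact this hg

lemma IsAuto.apply_out (hσ : C.IsAuto σ) : σ C.out = C.out :=
  C.out_unique _ fun h => by rw [← σ.apply_symm_apply h, hσ.1, C.out_no_outgoing]

variable (C) in
def inputFixingAutGroup : Subgroup (Equiv.Perm C.gates) :=
  C.autGroup ⊓ fixingSubgroup (Equiv.Perm C.gates) {g | (C.label g).isLeft}

lemma mem_inputFixingAutGroup_iff :
    σ ∈ C.inputFixingAutGroup ↔ C.IsAuto σ ∧ ∀ g, (C.label g).isLeft → σ g = g :=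
  Subgroup.mem_inf.trans (and_congr Iff.rfl (mem_fixingSubgroup_iff _))

lemma conj_mem_inputFixingAutGroup (hσ : C.IsAuto σ) (hτ : τ ∈ C.inputFixingAutGroup) :
    σ * τ * σ⁻¹ ∈ C.inputFixingAutGroup := by
  rw [mem_inputFixingAutGroup_iff] at hτ ⊢
  refine ⟨(hσ.mul hτ.1).mul hσ.inv, fun g hg => ?_⟩
  have hg' : (C.label (σ⁻¹ g)).isLeft := (hσ.inv.isLeft_label_apply_iff g).mpr hg
  show σ (τ (σ⁻¹ g)) = g
  rw [hτ.2 _ hg']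
  exact σ.apply_symm_apply g

lemma label_apply_of_mem (hτ : τ ∈ C.inputFixingAutGroup) (g : C.gates) :
    C.label (τ g) = C.label g := by
  rw [mem_inputFixingAutGroup_iff] at hτ
  rcases hg : C.label g with x | b
  · rw [hτ.2 g (by simp [hg]), hg]
  · exact hτ.1.2 g b hg

lemma Valuation.apply_of_mem [Field K] {val : C.gates → MvPolynomial X K}
    (hv : C.Valuation val) (hτ : τ ∈ C.inputFixingAutGroup) (g : C.gates) :
    val (τ g) = val g := by
  induction hn : C.rank g using Nat.strong_induction_on generalizing g with
  | _ n ih =>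
  have hτ' := mem_inputFixingAutGroup_iff.mp hτ
  have children (h : C.gates) :
      C.wires (τ h) (τ g) = C.wires h g ∧ (C.wires h g = 0 ∨ val (τ h) = val h) := by
    refine ⟨hτ'.1.1 h g, ?_⟩
    rcases Nat.eq_zero_or_pos (C.wires h g) with h0 | hpos
    · exact .inl h0
    · exact .inr (ih _ (hn ▸ C.acyclic h g hpos) h rfl)
  rcases hg : C.label g with x | (_ | _)
  · rw [hτ'.2 g (by simp [hg])]
  · rw [hv.2.2.1 _ ((label_apply_of_mem hτ g).trans hg), hv.2.2.1 _ hg,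
      ← Equiv.sum_comp τ]
    refine Finset.sum_congr rfl fun h _ => ?_
    obtain ⟨hw, h0 | hval⟩ := children h
    · rw [hw, h0, zero_smul, zero_smul]
    · rw [hw, hval]
  · rw [hv.2.2.2 _ ((label_apply_of_mem hτ g).trans hg), hv.2.2.2 _ hg,
      ← Equiv.prod_comp τ]
    refine Finset.prod_congr rfl fun h _ => ?_
    obtain ⟨hw, h0 | hval⟩ := children h
    · rw [hw, h0, pow_zero, pow_zero]
    · rw [hw, hval]

variable (C) in
instance orbitSetoid : Setoid C.gates :=
  MulAction.orbitRel C.inputFixingAutGroup C.gates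

variable (C) in
abbrev Orbit : Type := Quotient C.orbitSetoid

noncomputable instance : DecidableEq C.Orbit := Classical.decEq _

noncomputable instance : Fintype C.Orbit := Fintype.ofFinite _

lemma mk_eq_mk_iff {g h : C.gates} :
    (⟦g⟧ : C.Orbit) = ⟦h⟧ ↔ ∃ τ ∈ C.inputFixingAutGroup, τ h = g := by
  rw [Quotient.eq]
  exact MulAction.mem_orbit_iff.trans
    ⟨fun ⟨τ, hτ⟩ => ⟨τ, τ.2, hτ⟩, fun ⟨τ, hτ, e⟩ => ⟨⟨τ, hτ⟩, e⟩⟩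

lemma mk_apply_of_mem (hτ : τ ∈ C.inputFixingAutGroup) (g : C.gates) :
    (⟦τ g⟧ : C.Orbit) = ⟦g⟧ :=
  mk_eq_mk_iff.mpr ⟨τ, hτ, rfl⟩

lemma IsAuto.mk_apply_eq_mk_apply_iff (hσ : C.IsAuto σ) {g h : C.gates} :
    (⟦σ g⟧ : C.Orbit) = ⟦σ h⟧ ↔ (⟦g⟧ : C.Orbit) = ⟦h⟧ := by
  simp only [mk_eq_mk_iff]
  constructor
  · rintro ⟨τ, hτ, e⟩
    refine ⟨σ⁻¹ * τ * σ, by simpa using conj_mem_inputFixingAutGroup hσ.inv hτ, ?_⟩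
    simp [e]
  · rintro ⟨τ, hτ, rfl⟩
    exact ⟨σ * τ * σ⁻¹, conj_mem_inputFixingAutGroup hσ hτ, by simp⟩

variable (C) in
noncomputable def fiberWires (a : C.Orbit) (h : C.gates) : ℕ :=
  ∑ g with (⟦g⟧ : C.Orbit) = a, C.wires g h

lemma IsAuto.fiberWires_mk_apply (hσ : C.IsAuto σ) (g h : C.gates) :
    C.fiberWires ⟦σ g⟧ (σ h) = C.fiberWires ⟦g⟧ h := by
  refine (Finset.sum_equiv σ (fun g' => ?_) fun g' _ => (hσ.1 g' h).symm).symm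
  simp only [Finset.mem_filter, Finset.mem_univ, true_and, hσ.mk_apply_eq_mk_apply_iff]

variable (C) in
/-- The wires from orbit `a` into orbit `b` are all wires from members of `a` into one (any)
member of `b`. -/
noncomputable def orbitWires (a b : C.Orbit) : ℕ :=
  Quotient.lift (C.fiberWires a) (fun h h' hr => by
    obtain ⟨τ, hτ, rfl⟩ := mk_eq_mk_iff.mp (Quotient.sound hr)
    induction a using Quotient.inductionOn with | _ g =>
    rw [← mk_apply_of_mem hτ g,
      (mem_inputFixingAutGroup_iff.mp hτ).1.fiberWires_mk_apply, mk_apply_of_mem hτ]) b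

lemma orbitWires_mk (a : C.Orbit) (h : C.gates) : C.orbitWires a ⟦h⟧ = C.fiberWires a h := rfl

lemma wires_le_orbitWires (g h : C.gates) : C.wires g h ≤ C.orbitWires ⟦g⟧ ⟦h⟧ :=
  Finset.single_le_sum (f := (C.wires · h)) (fun _ _ => Nat.zero_le _) (by simp)

lemma exists_wires_pos_of_orbitWires_pos {a : C.Orbit} {h : C.gates}
    (hpos : 0 < C.orbitWires a ⟦h⟧) : ∃ g, (⟦g⟧ : C.Orbit) = a ∧ 0 < C.wires g h := by
  simpa using Finset.sum_pos_iff.mp hpos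

@[to_additive]
lemma prod_pow_orbitWires {M : Type} [CommMonoid M] (F : C.Orbit → M) (h : C.gates) :
    ∏ b, F b ^ C.orbitWires b ⟦h⟧ = ∏ g, F ⟦g⟧ ^ C.wires g h := by
  rw [← Finset.prod_fiberwise Finset.univ (fun g => (⟦g⟧ : C.Orbit))]
  refine Finset.prod_congr rfl fun b _ => ?_
  rw [orbitWires_mk, fiberWires, ← Finset.prod_pow_eq_pow_sum]
  exact Finset.prod_congr rfl fun g hg => by rw [(Finset.mem_filter.mp hg).2]

variable (C) in
noncomputable def orbitRank (a : C.Orbit) : ℕ :=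
  sInf {n | ∃ g, (⟦g⟧ : C.Orbit) = a ∧ C.rank g = n}

lemma orbitRank_mk_le (g : C.gates) : C.orbitRank ⟦g⟧ ≤ C.rank g :=
  Nat.sInf_le ⟨g, rfl, rfl⟩

lemma exists_rank_eq_orbitRank (a : C.Orbit) :
    ∃ h, (⟦h⟧ : C.Orbit) = a ∧ C.rank h = C.orbitRank a := by
  induction a using Quotient.inductionOn with | _ g =>
  exact Nat.sInf_mem (s := {n | ∃ h, (⟦h⟧ : C.Orbit) = ⟦g⟧ ∧ C.rank h = n})
    ⟨_, g, rfl, rfl⟩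

variable (C) in
noncomputable abbrev mergeOrbits : Circuit X K where
  gates := C.Orbit
  wires := C.orbitWires
  label := Quotient.lift C.label fun g h hr => by
    obtain ⟨τ, hτ, rfl⟩ := mk_eq_mk_iff.mp (Quotient.sound hr)
    exact label_apply_of_mem hτ h
  rank := C.orbitRank
  acyclic a b hpos := by
    obtain ⟨h, rfl, hrank⟩ := exists_rank_eq_orbitRank b
    obtain ⟨g, rfl, hw⟩ := exists_wires_pos_of_orbitWires_pos hpos
    exact hrank ▸ (orbitRank_mk_le g).trans_lt (C.acyclic g h hw)
  input_no_incoming a b hb := by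
    induction b using Quotient.inductionOn with
    | _ h => exact Finset.sum_eq_zero fun g _ => C.input_no_incoming g h hb
  input_unique a b x ha hb := by
    induction a using Quotient.inductionOn with | _ g =>
    induction b using Quotient.inductionOn with | _ h =>
    exact congrArg _ (C.input_unique g h x ha hb)
  out := ⟦C.out⟧
  out_no_outgoing b := by
    induction b using Quotient.inductionOn with | _ h =>
    refine Finset.sum_eq_zero fun g hg => ?_
    obtain ⟨τ, hτ, rfl⟩ := mk_eq_mk_iff.mp (Finset.mem_filter.mp hg).2
    rw [(mem_inputFixingAutGroup_iff.mp hτ).1.apply_out, C.out_no_outgoing]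
  out_unique a ha := by
    induction a using Quotient.inductionOn with | _ g =>
    exact congrArg _ (C.out_unique g fun h =>
      Nat.eq_zero_of_le_zero ((wires_le_orbitWires g h).trans_eq (ha ⟦h⟧)))

lemma card_mergeOrbits_lt (hC : ¬C.Rigid) :
    Fintype.card C.mergeOrbits.gates < Fintype.card C.gates := by
  simp only [Rigid, not_forall] at hC
  obtain ⟨σ, hσ, hfix, hne⟩ := hC
  obtain ⟨g, hg⟩ : ∃ g, σ g ≠ g := not_forall.mp fun h => hne (Equiv.ext h)
  have hmem : σ ∈ C.inputFixingAutGroup := mem_inputFixingAutGroup_iff.mpr ⟨hσ, hfix⟩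
  exact Fintype.card_lt_of_surjective_not_injective (fun g => (⟦g⟧ : C.Orbit))
    Quotient.mk_surjective fun hinj => hg (hinj (mk_apply_of_mem hmem g))

lemma size_mergeOrbits_le : C.mergeOrbits.size ≤ C.size := by
  refine Nat.add_le_add (Fintype.card_le_of_surjective _ Quotient.mk_surjective) ?_
  have hin (b : C.Orbit) : ∑ a, C.orbitWires a b = ∑ g, C.wires g b.out := by
    simpa using sum_nsmul_orbitWires (fun _ => (1 : ℕ)) b.out
  calc ∑ a, ∑ b, C.orbitWires a b
      = ∑ b, ∑ a, C.orbitWires a b := Finset.sum_comm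
    _ ≤ ∑ b : C.Orbit, ∑ h with (⟦h⟧ : C.Orbit) = b, ∑ g, C.wires g h :=
        Finset.sum_le_sum fun b _ => (hin b).trans_le <|
          Finset.single_le_sum (f := fun h => ∑ g, C.wires g h) (fun _ _ => Nat.zero_le _)
            (by simp)
    _ = ∑ h, ∑ g, C.wires g h := Finset.sum_fiberwise _ _ _
    _ = ∑ g, ∑ h, C.wires g h := Finset.sum_comm

lemma Computes.mergeOrbits [Field K] {p : MvPolynomial X K} (hC : C.Computes p) :
    C.mergeOrbits.Computes p := by
  obtain ⟨val, hv, rfl⟩ := hC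
  let val' : C.Orbit → MvPolynomial X K := Quotient.lift val fun g h hr => by
    obtain ⟨τ, hτ, rfl⟩ := mk_eq_mk_iff.mp (Quotient.sound hr)
    exact hv.apply_of_mem hτ h
  refine ⟨val', ⟨fun a => ?_, fun a => ?_, fun a => ?_, fun a => ?_⟩, rfl⟩ <;>
    induction a using Quotient.inductionOn with | _ g => ?_
  · exact hv.1 g
  · exact hv.2.1 g
  · exact fun hg => (hv.2.2.1 g hg).trans (sum_nsmul_orbitWires val' g).symm
  · exact fun hg => (hv.2.2.2 g hg).trans (prod_pow_orbitWires val' g).symm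

lemma Symmetric.mergeOrbits {Γ : Type} [Group Γ] [MulAction Γ X] (hC : C.Symmetric Γ) :
    C.mergeOrbits.Symmetric Γ := by
  intro π
  obtain ⟨σ, hσ, hlabel⟩ := hC π
  refine ⟨Quotient.congr σ fun g h => ?_, ⟨fun a b => ?_, fun a b hb => ?_⟩,
    fun a x hx => ?_⟩
  · rw [← Quotient.eq, ← Quotient.eq]
    exact hσ.mk_apply_eq_mk_apply_iff.symm
  · induction a using Quotient.inductionOn with | _ g =>
    induction b using Quotient.inductionOn with | _ h =>
    exact hσ.fiberWires_mk_apply g h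
  · induction a using Quotient.inductionOn with | _ g =>
    exact hσ.2 g b hb
  · induction a using Quotient.inductionOn with | _ g =>
    exact hlabel g x hx

lemma IsFormulaML.mergeOrbits (hC : C.IsFormulaML) : C.mergeOrbits.IsFormulaML := by
  intro a ha hout
  induction a using Quotient.inductionOn with | _ g =>
  obtain ⟨h₀, hh₀⟩ := Finset.card_eq_one.mp (hC g ha fun e => hout (congrArg _ e))
  have parent (h : C.gates) : 0 < C.wires g h ↔ h = h₀ := by
    simpa using Finset.ext_iff.mp hh₀ h
  refine Finset.card_eq_one.mpr ⟨⟦h₀⟧, Finset.ext fun b => ?_⟩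
  induction b using Quotient.inductionOn with | _ h =>
  rw [Finset.mem_filter, Finset.mem_singleton, and_iff_right (Finset.mem_univ _)]
  constructor
  · intro hpos
    obtain ⟨_, hg', hw⟩ := exists_wires_pos_of_orbitWires_pos hpos
    obtain ⟨τ, hτ, rfl⟩ := mk_eq_mk_iff.mp hg'
    have hτh : τ⁻¹ h = h₀ := by
      rw [← parent, ← (mem_inputFixingAutGroup_iff.mp hτ).1.1]
      simpa using hw
    rw [← hτh, mk_apply_of_mem (inv_mem hτ)]
  · intro e
    rw [e]
    exact ((parent h₀).mpr rfl).trans_le (wires_le_orbitWires g h₀)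

lemma IsSkew.mergeOrbits (hC : C.IsSkew) : C.mergeOrbits.IsSkew := by
  intro a ha
  induction a using Quotient.inductionOn with | _ g =>
  have internal_child (b : C.Orbit)
      (hb : b ∈ Finset.univ.filter fun b =>
        0 < C.mergeOrbits.wires b ⟦g⟧ ∧ (C.mergeOrbits.label b).isRight) :
      ∃ h ∈ Finset.univ.filter fun h => 0 < C.wires h g ∧ (C.label h).isRight,
        ⟦h⟧ = b := by
    obtain ⟨hpos, hb⟩ := (Finset.mem_filter.mp hb).2
    obtain ⟨h, rfl, hw⟩ := exists_wires_pos_of_orbitWires_pos hpos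
    exact ⟨h, Finset.mem_filter.mpr ⟨Finset.mem_univ h, hw, hb⟩, rfl⟩
  refine Finset.card_le_one.mpr fun b₁ hb₁ b₂ hb₂ => ?_
  obtain ⟨h₁, hh₁, rfl⟩ := internal_child b₁ hb₁
  obtain ⟨h₂, hh₂, rfl⟩ := internal_child b₂ hb₂
  rw [Finset.card_le_one.mp (hC g ha) h₁ hh₁ h₂ hh₂]

lemma exists_rigid_of_mergeOrbits (P : Circuit X K → Prop)
    (hP : ∀ D, P D → P D.mergeOrbits) (hC : P C) : ∃ D, D.Rigid ∧ P D := by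
  induction hn : Fintype.card C.gates using Nat.strong_induction_on generalizing C with
  | _ n ih =>
  by_cases hrig : C.Rigid
  · exact ⟨C, hrig, hC⟩
  · exact ih _ (hn ▸ card_mergeOrbits_lt hrig) (hP C hC) rfl

end Circuit

/-- Rigidification: if `C` is a `Γ`-symmetric circuit over the variables `X` and the field
`K`, then there is a `Γ`-symmetric *rigid* circuit `C'` with `‖C'‖ ≤ ‖C‖` computing the
same polynomial; moreover if `C` is a symmetric formula then `C'` is a symmetric formula
with multiedges, and if `C` is a symmetric skew circuit then so is `C'`. -/
theorem rigidification (X K Γ : Type) [Field K] [Group Γ] [MulAction Γ X]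
    (C : Circuit X K) (p : MvPolynomial X K)
    (hsym : Circuit.Symmetric Γ C) (hcomp : C.Computes p) :
    ∃ C' : Circuit X K,
      Circuit.Symmetric Γ C' ∧ C'.Rigid ∧ C'.size ≤ C.size ∧ C'.Computes p ∧
      (C.IsFormula → C'.IsFormulaML) ∧ (C.IsSkew → C'.IsSkew) := by
  obtain ⟨C', hrig, hsym', hsize, hcomp', hformula, hskew⟩ :=
    Circuit.exists_rigid_of_mergeOrbits
      (fun D => D.Symmetric Γ ∧ D.size ≤ C.size ∧ D.Computes p ∧
        (C.IsFormulaML → D.IsFormulaML) ∧ (C.IsSkew → D.IsSkew))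
      (fun D ⟨hsym, hsize, hcomp, hformula, hskew⟩ =>
        ⟨hsym.mergeOrbits, Circuit.size_mergeOrbits_le.trans hsize, hcomp.mergeOrbits,
          fun hC => (hformula hC).mergeOrbits, fun hC => (hskew hC).mergeOrbits⟩)
      ⟨hsym, le_rfl, hcomp, id, id⟩
  exact ⟨C', hsym', hrig, hsize, hcomp', fun hC => hformula hC.2, hskew⟩
end
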